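/- For every i ≥ 1, every word x with at least i occurrences of `false`, and every word y: ⟨a_{q,i}† x | y⟩ = ⟨x | a_{q,i} y⟩, where the right side is 0 if y has fewer than i occurrences of `false`. That is, doubling the i-th anti-pawn is adjoint to deleting the i-th anti-pawn. -/

import Mathlib

/-- A single pawn move: a pawn (`true`) advances one square rightward into an
empty square (`false`). -/
def PawnMove (w₀ w₁ : List Bool) : Prop :=
  ∃ u v : List Bool, w₀ = u ++ [true, false] ++ v ∧ w₁ = u ++ [false, true] ++ v

/-- Reachability: the reflexive-transitive closure of the single-move relation. -/
def Reach : List Bool → List Bool → Prop :=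
  Relation.ReflTransGen PawnMove

/-- The `ZMod 2` pairing `⟨w₀|w₁⟩`: `1` if `w₁` is reachable from `w₀`, else `0`. -/
noncomputable def pairing (w₀ w₁ : List Bool) : ZMod 2 :=
  open Classical in if Reach w₀ w₁ then 1 else 0

/-- Pairing extended to `Option`: any pairing in which one argument is `0`
(i.e. `none`) equals `0`. -/
noncomputable def pairingO : Option (List Bool) → Option (List Bool) → ZMod 2
  | some x, some y => pairing x y
  | none, _ => 0
  | _, none => 0

/-- `delOcc b i w` deletes the `i`-th occurrence (counted from the left,
starting at `1`) of `b` in `w`; it is `none` (i.e. `0`) if `w` has fewer than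
`i` occurrences of `b`. -/
def delOcc (b : Bool) : ℕ → List Bool → Option (List Bool)
  | _, [] => none
  | i, a :: w =>
    if a = b then
      if i = 1 then some w
      else Option.map (List.cons a) (delOcc b (i - 1) w)
    else Option.map (List.cons a) (delOcc b i w)

/-- `dblOcc b i w` doubles the `i`-th occurrence (counted from the left,
starting at `1`) of `b` in `w`, i.e. inserts an additional `b` immediately
before it; it is `none` (i.e. `0`) if `w` has fewer than `i` occurrences of
`b`. -/
def dblOcc (b : Bool) : ℕ → List Bool → Option (List Bool)
  | _, [] => none
  | i, a :: w =>
    if a = b then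
      if i = 1 then some (b :: a :: w)
      else Option.map (List.cons a) (dblOcc b (i - 1) w)
    else Option.map (List.cons a) (dblOcc b i w)

/-!
Words are compared letter by letter from the left. An anti-pawn in front never moves, so a
leading `false` on the left forces a leading `false` on the right; equal leading letters cancel;
and `true :: u` reaches `false :: v` exactly when `v` is reachable from `u` with its first
anti-pawn filled (the hole travels to the front through the pawns before it). Both sides of the
adjunction obey these rules, so it follows by induction on the length of `x`. The one case that
is not structural is `x = true :: w` against `y = false :: v`: there the pairing continues
with `w` with its first anti-pawn filled, and filling that anti-pawn commutes with doubling a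
later one.
-/

namespace PawnMove

variable {u v w : List Bool}

theorem count_eq (h : PawnMove u v) (b : Bool) : u.count b = v.count b := by
  obtain ⟨s, t, rfl, rfl⟩ := h
  simp only [List.count_append, List.count_cons]
  omega

theorem cons (a : Bool) (h : PawnMove u v) : PawnMove (a :: u) (a :: v) := by
  obtain ⟨s, t, rfl, rfl⟩ := h
  exact ⟨a :: s, t, rfl, rfl⟩

theorem cons_left {a : Bool} (h : PawnMove (a :: u) w) :
    (∃ u', w = a :: u' ∧ PawnMove u u') ∨
      (a = true ∧ ∃ s, u = false :: s ∧ w = false :: true :: s) := by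
  obtain ⟨_ | ⟨c, s⟩, t, h, rfl⟩ := h
  · simp only [List.nil_append, List.cons_append, List.cons.injEq] at h
    exact .inr ⟨h.1, t, h.2, rfl⟩
  · simp only [List.cons_append, List.cons.injEq] at h
    obtain ⟨rfl, rfl⟩ := h
    exact .inl ⟨_, rfl, s, t, rfl, rfl⟩

theorem replace_false (h : PawnMove u v) :
    Reach (u.replace false true) (v.replace false true) := by
  obtain ⟨s, t, rfl, rfl⟩ := h
  simp only [List.append_assoc]
  by_cases hs : false ∈ s
  · rw [List.replace_append_left hs, List.replace_append_left hs]
    exact .single ⟨_, t, (List.append_assoc ..).symm, (List.append_assoc ..).symm⟩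
  · simp [List.replace_append_right hs, List.replace_cons]
    exact .refl

end PawnMove

namespace Reach

variable {u v w : List Bool}

theorem cons (a : Bool) (h : Reach u v) : Reach (a :: u) (a :: v) :=
  Relation.ReflTransGen.lift (a :: ·) (fun _ _ => PawnMove.cons a) _ _ h

theorem false_cons (h : Reach (false :: u) w) : ∃ v, w = false :: v ∧ Reach u v := by
  induction h with
  | refl => exact ⟨u, rfl, .refl⟩
  | tail _ hm ih =>
    obtain ⟨v, rfl, hv⟩ := ih
    rcases hm.cons_left with ⟨v', rfl, hv'⟩ | ⟨h, -⟩
    · exact ⟨v', rfl, hv.tail hv'⟩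
    · cases h

theorem true_cons_replace (hu : false ∈ u) :
    Reach (true :: u) (false :: u.replace false true) := by
  induction u with
  | nil => cases hu
  | cons a r ih =>
    cases a
    · exact .single ⟨[], r, rfl, rfl⟩
    · have hr : false ∈ r := by simpa using hu
      simp only [List.replace_cons]
      exact ((ih hr).cons true).tail ⟨[], _, rfl, rfl⟩

end Reach

theorem not_reach_cons_nil (a : Bool) (u : List Bool) : ¬Reach (a :: u) [] := by
  intro h
  rcases Relation.ReflTransGen.cases_tail h with h | ⟨_, _, s, t, -, h⟩
  · cases h
  · simp at h

theorem not_reach_false_cons_true_cons (u v : List Bool) : ¬Reach (false :: u) (true :: v) := by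
  intro h
  obtain ⟨_, h, -⟩ := h.false_cons
  cases h

theorem reach_cons_cons_iff (a : Bool) (u v : List Bool) :
    Reach (a :: u) (a :: v) ↔ Reach u v := by
  refine ⟨fun h => ?_, Reach.cons a⟩
  cases a
  · obtain ⟨_, h, hv⟩ := h.false_cons
    cases h
    exact hv
  · generalize hw : true :: u = w at h
    induction h using Relation.ReflTransGen.head_induction_on generalizing u with
    | refl => cases hw; exact .refl
    | head hm hr ih =>
      subst hw
      rcases hm.cons_left with ⟨u', rfl, hu'⟩ | ⟨-, s, rfl, rfl⟩
      · exact .head hu' (ih _ rfl)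
      · exact absurd hr (not_reach_false_cons_true_cons _ _)

theorem reach_true_cons_false_cons_iff (u v : List Bool) :
    Reach (true :: u) (false :: v) ↔ false ∈ u ∧ Reach (u.replace false true) v := by
  refine ⟨fun h => ?_, fun ⟨hu, h⟩ => (Reach.true_cons_replace hu).trans (h.cons false)⟩
  generalize hw : true :: u = w at h
  induction h using Relation.ReflTransGen.head_induction_on generalizing u with
  | refl => cases hw
  | head hm hr ih =>
    subst hw
    rcases hm.cons_left with ⟨u', rfl, hu'⟩ | ⟨-, s, rfl, rfl⟩
    · obtain ⟨hmem, hr'⟩ := ih _ rfl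
      refine ⟨?_, hu'.replace_false.trans hr'⟩
      rwa [← List.count_pos_iff, hu'.count_eq, List.count_pos_iff]
    · obtain ⟨_, h, hv⟩ := Reach.false_cons hr
      cases h
      exact ⟨by simp, by simpa using hv⟩

section Pairing

variable (a : Bool) (u v : List Bool) (o p : Option (List Bool))

@[simp]
theorem pairing_cons_cons : pairing (a :: u) (a :: v) = pairing u v := by
  rw [pairing, pairing, reach_cons_cons_iff]

@[simp]
theorem pairing_false_cons_true_cons : pairing (false :: u) (true :: v) = 0 :=
  if_neg (not_reach_false_cons_true_cons u v)

@[simp]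
theorem pairing_cons_nil : pairing (a :: u) [] = 0 :=
  if_neg (not_reach_cons_nil a u)

theorem pairing_true_cons_false_cons {u : List Bool} (hu : false ∈ u) :
    pairing (true :: u) (false :: v) = pairing (u.replace false true) v := by
  rw [pairing, pairing, reach_true_cons_false_cons_iff, and_iff_right hu]

@[simp]
theorem pairingO_some_some : pairingO (some u) (some v) = pairing u v := rfl

@[simp]
theorem pairingO_none_left : pairingO none p = 0 := rfl

@[simp]
theorem pairingO_none_right : pairingO o none = 0 := by
  cases o <;> rfl

@[simp]
theorem pairingO_map_cons_some_cons :
    pairingO (o.map (a :: ·)) (some (a :: v)) = pairingO o (some v) := by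
  cases o <;> simp

@[simp]
theorem pairingO_some_cons_map_cons :
    pairingO (some (a :: u)) (p.map (a :: ·)) = pairingO (some u) p := by
  cases p <;> simp

@[simp]
theorem pairingO_map_cons_some_nil : pairingO (o.map (a :: ·)) (some []) = 0 := by
  cases o <;> simp

@[simp]
theorem pairingO_map_false_cons_some_true_cons :
    pairingO (o.map (false :: ·)) (some (true :: v)) = 0 := by
  cases o <;> simp

@[simp]
theorem pairingO_some_false_cons_map_true_cons :
    pairingO (some (false :: u)) (p.map (true :: ·)) = 0 := by
  cases p <;> simp

theorem pairingO_some_true_cons_map_false_cons {u : List Bool} (hu : false ∈ u) :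
    pairingO (some (true :: u)) (p.map (false :: ·)) =
      pairingO (some (u.replace false true)) p := by
  cases p <;> simp [pairing_true_cons_false_cons _ hu]

end Pairing

section Occurrences

variable {b : Bool} {i : ℕ} {w w' : List Bool}

@[simp]
theorem dblOcc_zero (b : Bool) (w : List Bool) : dblOcc b 0 w = none := by
  induction w with
  | nil => rfl
  | cons a w ih => by_cases h : a = b <;> simp [dblOcc, h, ih]

@[simp]
theorem delOcc_zero (b : Bool) (w : List Bool) : delOcc b 0 w = none := by
  induction w with
  | nil => rfl
  | cons a w ih => by_cases h : a = b <;> simp [delOcc, h, ih]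

theorem exists_dblOcc_eq_some (h : i + 1 ≤ w.count b) : ∃ w', dblOcc b (i + 1) w = some w' := by
  induction w generalizing i with
  | nil => simp at h
  | cons a w ih =>
    by_cases ha : a = b
    · subst ha
      rcases i with _ | i
      · simp [dblOcc]
      · obtain ⟨w', hw'⟩ := ih (i := i) (by simpa using h)
        simp [dblOcc, hw']
    · obtain ⟨w', hw'⟩ := ih (i := i) (by simpa [List.count_cons, ha] using h)
      simp [dblOcc, ha, hw']

theorem mem_of_dblOcc_eq_some (h : dblOcc b i w = some w') : b ∈ w' := by
  induction w generalizing i w' with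
  | nil => simp [dblOcc] at h
  | cons a w ih =>
    by_cases ha : a = b
    · subst ha
      by_cases hi : i = 1
      · simp only [dblOcc, hi, if_true, Option.some.injEq] at h
        simp [← h]
      · simp only [dblOcc, hi, if_true, if_false, Option.map_eq_some_iff] at h
        obtain ⟨w'', hw'', rfl⟩ := h
        exact List.mem_cons_of_mem _ (ih hw'')
    · simp only [dblOcc, ha, if_false, Option.map_eq_some_iff] at h
      obtain ⟨w'', hw'', rfl⟩ := h
      exact List.mem_cons_of_mem _ (ih hw'')

theorem replace_of_dblOcc_false_one_eq_some (h : dblOcc false 1 w = some w') :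
    w'.replace false true = true :: w := by
  induction w generalizing w' with
  | nil => simp [dblOcc] at h
  | cons a w ih =>
    cases a
    · simp only [dblOcc, if_true, Option.some.injEq] at h
      simp [← h]
    · simp only [dblOcc, Bool.true_eq_false, if_false, Option.map_eq_some_iff] at h
      obtain ⟨w'', hw'', rfl⟩ := h
      simp [List.replace_cons, ih hw'']

theorem map_replace_dblOcc_false (i : ℕ) (w : List Bool) :
    (dblOcc false (i + 2) w).map (·.replace false true) =
      dblOcc false (i + 1) (w.replace false true) := by
  induction w with
  | nil => rfl
  | cons a w ih =>
    cases a
    · simp [dblOcc, Option.map_map, Function.comp_def]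
    · simp [dblOcc, List.replace_cons, Option.map_map, Function.comp_def, ← ih]

end Occurrences

def DblDelAdjoint (i : ℕ) (x : List Bool) : Prop :=
  ∀ y, pairingO (dblOcc false i x) (some y) = pairingO (some x) (delOcc false i y)

namespace DblDelAdjoint

theorem zero (x : List Bool) : DblDelAdjoint 0 x := by
  simp [DblDelAdjoint]

theorem one_false_cons (w : List Bool) : DblDelAdjoint 1 (false :: w) := by
  rintro (_ | ⟨_ | _, v⟩) <;> simp [dblOcc, delOcc]

theorem false_cons {i : ℕ} {w : List Bool} (h : DblDelAdjoint (i + 1) w) :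
    DblDelAdjoint (i + 2) (false :: w) := by
  rintro (_ | ⟨_ | _, v⟩)
  · simp [dblOcc, delOcc]
  · simp [dblOcc, delOcc, h v]
  · simp [dblOcc, delOcc]

theorem one_true_cons {w : List Bool} (hw : false ∈ w) (h : DblDelAdjoint 1 w) :
    DblDelAdjoint 1 (true :: w) := by
  obtain ⟨w', hw'⟩ := exists_dblOcc_eq_some (i := 0) (List.count_pos_iff.mpr hw)
  rintro (_ | ⟨_ | _, v⟩)
  · simp [dblOcc, delOcc]
  · simp [dblOcc, delOcc, hw', pairing_true_cons_false_cons _ (mem_of_dblOcc_eq_some hw'),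
      replace_of_dblOcc_false_one_eq_some hw']
  · simp [dblOcc, delOcc, h v]

theorem true_cons {i : ℕ} {w : List Bool} (hw : i + 2 ≤ w.count false)
    (h : DblDelAdjoint (i + 2) w) (h' : DblDelAdjoint (i + 1) (w.replace false true)) :
    DblDelAdjoint (i + 2) (true :: w) := by
  obtain ⟨w', hw'⟩ := exists_dblOcc_eq_some hw
  rintro (_ | ⟨_ | _, v⟩)
  · simp [dblOcc, delOcc]
  · have hrep : dblOcc false (i + 1) (w.replace false true) = some (w'.replace false true) := by
      rw [← map_replace_dblOcc_false, hw', Option.map_some]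
    calc pairingO (dblOcc false (i + 2) (true :: w)) (some (false :: v))
        = pairingO (dblOcc false (i + 1) (w.replace false true)) (some v) := by
          simp [dblOcc, hw', hrep, pairing_true_cons_false_cons _ (mem_of_dblOcc_eq_some hw')]
      _ = pairingO (some (w.replace false true)) (delOcc false (i + 1) v) := h' v
      _ = pairingO (some (true :: w)) (delOcc false (i + 2) (false :: v)) := by
          simp [delOcc, pairingO_some_true_cons_map_false_cons _
            (List.count_pos_iff.mp (by omega : 0 < w.count false))]
  · simp [dblOcc, delOcc, h v]

end DblDelAdjoint

theorem dblDelAdjoint_of_le_count :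
    ∀ (i : ℕ) (x : List Bool), i ≤ x.count false → DblDelAdjoint i x
  | 0, x, _ => .zero x
  | _ + 1, [], h => absurd h (by simp)
  | 1, false :: w, _ => .one_false_cons w
  | i + 2, false :: w, h => (dblDelAdjoint_of_le_count (i + 1) w (by simpa using h)).false_cons
  | 1, true :: w, h =>
    have hw : 1 ≤ w.count false := by simpa using h
    .one_true_cons (List.count_pos_iff.mp hw) (dblDelAdjoint_of_le_count 1 w hw)
  | i + 2, true :: w, h =>
    have hw : i + 2 ≤ w.count false := by simpa using h
    .true_cons hw (dblDelAdjoint_of_le_count (i + 2) w hw)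
      (dblDelAdjoint_of_le_count (i + 1) (w.replace false true) (by
        simp [List.count_replace, List.count_pos_iff.mp (by omega : 0 < w.count false)]
        omega))
termination_by _ x => x.length

theorem dbl_del_antipawn_adjoint_general (i : ℕ) (x : List Bool)
    (hx : i ≤ x.count false) (y : List Bool) :
    pairingO (dblOcc false i x) (some y) = pairingO (some x) (delOcc false i y) :=
  dblDelAdjoint_of_le_count i x hx y

/-- Doubling the `i`-th anti-pawn is adjoint to deleting the `i`-th anti-pawn:
`⟨a_{q,i}† x | y⟩ = ⟨x | a_{q,i} y⟩`. -/
theorem dbl_del_antipawn_adjoint (i : ℕ) (hi : 1 ≤ i) (x : List Bool)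
    (hx : i ≤ x.count false) (y : List Bool) :
    pairingO (dblOcc false i x) (some y) = pairingO (some x) (delOcc false i y) :=
  dbl_del_antipawn_adjoint_general i x hx y
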